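/- Let G be a graph of order n ≥ 2 and let Ĝ be the graph of order 5n obtained from G by attaching the central vertex of a disjoint copy of the path P_5 to each vertex of G (i.e., for each v ∈ V(G), add a new path a_v b_v c_v d_v e_v and the edge v c_v). Then γ_R(Ĝ) = 4n. -/

import Mathlib

/-- A Roman dominating function on `G`: labels in `{0,1,2}` and every vertex
labeled `0` has a neighbor labeled `2`. -/
def IsRDF {V : Type*} (G : SimpleGraph V) (f : V → ℕ) : Prop :=
  (∀ v, f v ≤ 2) ∧ ∀ v, f v = 0 → ∃ u, G.Adj v u ∧ f u = 2

/-- The Roman domination number of `G`. -/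
noncomputable def romanDom {V : Type*} [Fintype V] (G : SimpleGraph V) : ℕ :=
  sInf {w | ∃ f, IsRDF G f ∧ ∑ v, f v = w}

/-- The Roman domination number of the vertex-deleted graph `G - v`. -/
noncomputable def romanDomDel {V : Type*} [Fintype V] [DecidableEq V]
    (G : SimpleGraph V) (v : V) : ℕ :=
  romanDom (G.induce {w | w ≠ v})

/-- The Roman bondage number of `G`. -/
noncomputable def romanBondage {V : Type*} [Fintype V] [DecidableEq V]
    (G : SimpleGraph V) : ℕ :=
  sInf {k | ∃ B : Finset (Sym2 V), ↑B ⊆ G.edgeSet ∧ B.card = k ∧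
    romanDom (G.deleteEdges ↑B) ≠ romanDom G}

/-- The graph `Ĝ` obtained from `G` by attaching to each vertex `v` of `G`
the central vertex of a new copy of the path `P₅`. -/
def hatGraph {V : Type*} (G : SimpleGraph V) : SimpleGraph (V ⊕ V × Fin 5) :=
  SimpleGraph.fromRel (fun a b => match a, b with
    | Sum.inl u, Sum.inl w => G.Adj u w
    | Sum.inl u, Sum.inr (v, i) => u = v ∧ i = 2
    | Sum.inr (v, i), Sum.inr (w, j) => v = w ∧ (SimpleGraph.pathGraph 5).Adj i j
    | _, _ => False)

/-! Under a Roman dominating function of `Ĝ`, every attached path `a b c d e` carries weight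
at least 4 by itself, since `a, b, d, e` have all their neighbours on the path: the conditions at
`a` and `b` force weight at least 2 on `{a, b}` unless `c` is labelled 2, and even then at least 1;
symmetrically for `{d, e}`. Labelling every `c_v` by 2 and every `a_v, e_v` by 1 attains `4n`. -/

open SimpleGraph

theorem isRDF_const_two {V : Type*} (G : SimpleGraph V) : IsRDF G fun _ => 2 :=
  ⟨fun _ => le_rfl, fun _ h => absurd h two_ne_zero⟩

theorem romanDom_le {V : Type*} [Fintype V] {G : SimpleGraph V} {f : V → ℕ}
    (hf : IsRDF G f) : romanDom G ≤ ∑ v, f v :=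
  Nat.sInf_le ⟨f, hf, rfl⟩

theorem le_romanDom {V : Type*} [Fintype V] {G : SimpleGraph V} {k : ℕ}
    (h : ∀ f, IsRDF G f → k ≤ ∑ v, f v) : k ≤ romanDom G :=
  le_csInf ⟨_, _, isRDF_const_two G, rfl⟩ fun _ ⟨f, hf, hw⟩ => hw ▸ h f hf

theorem four_le_sum_of_pathGraph_five {p : Fin 5 → ℕ}
    (hp : ∀ i ≠ 2, p i = 0 → ∃ j, (pathGraph 5).Adj i j ∧ p j = 2) :
    4 ≤ ∑ i, p i := by
  have h0 : p 0 = 0 → p 1 = 2 := fun h => by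
    simpa [Fin.exists_iff_succ, pathGraph_adj] using hp 0 (by decide) h
  have h1 : p 1 = 0 → p 2 = 2 ∨ p 0 = 2 := fun h => by
    simpa [Fin.exists_iff_succ, pathGraph_adj] using hp 1 (by decide) h
  have h3 : p 3 = 0 → p 4 = 2 ∨ p 2 = 2 := fun h => by
    simpa [Fin.exists_iff_succ, pathGraph_adj] using hp 3 (by decide) h
  have h4 : p 4 = 0 → p 3 = 2 := fun h => by
    simpa [Fin.exists_iff_succ, pathGraph_adj] using hp 4 (by decide) h
  rw [Fin.sum_univ_five]
  omega

namespace hatGraph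

variable {V : Type*} {G : SimpleGraph V}

theorem adj_inr_inr {v w : V} {i j : Fin 5} :
    (hatGraph G).Adj (.inr (v, i)) (.inr (w, j)) ↔ v = w ∧ (pathGraph 5).Adj i j := by
  rw [hatGraph, fromRel_adj]
  constructor
  · rintro ⟨-, ⟨rfl, h⟩ | ⟨rfl, h⟩⟩
    exacts [⟨rfl, h⟩, ⟨rfl, h.symm⟩]
  · rintro ⟨rfl, h⟩
    exact ⟨fun he => h.ne (Prod.ext_iff.mp (Sum.inr_injective he)).2, .inl ⟨rfl, h⟩⟩

theorem adj_inl_inr {u v : V} {i : Fin 5} :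
    (hatGraph G).Adj (.inl u) (.inr (v, i)) ↔ u = v ∧ i = 2 := by
  rw [hatGraph, fromRel_adj]
  simp only [ne_eq, reduceCtorEq, not_false_eq_true, true_and]
  exact or_iff_left not_false

theorem exists_eq_inr_of_adj_inr {v : V} {i : Fin 5} {u : V ⊕ V × Fin 5}
    (h : (hatGraph G).Adj (.inr (v, i)) u) (hi : i ≠ 2) :
    ∃ j, u = .inr (v, j) ∧ (pathGraph 5).Adj i j := by
  rcases u with w | ⟨w, j⟩
  · exact absurd (adj_inl_inr.mp h.symm).2 hi
  · obtain ⟨rfl, hij⟩ := adj_inr_inr.mp h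
    exact ⟨j, rfl, hij⟩

theorem four_le_sum_path [Fintype V] {f : V ⊕ V × Fin 5 → ℕ} (hf : IsRDF (hatGraph G) f)
    (v : V) : 4 ≤ ∑ i, f (.inr (v, i)) := by
  refine four_le_sum_of_pathGraph_five fun i hi h0 => ?_
  obtain ⟨u, hu, hu2⟩ := hf.2 _ h0
  obtain ⟨j, rfl, hij⟩ := exists_eq_inr_of_adj_inr hu hi
  exact ⟨j, hij, hu2⟩

theorem four_mul_card_le_sum [Fintype V] {f : V ⊕ V × Fin 5 → ℕ}
    (hf : IsRDF (hatGraph G) f) : 4 * Fintype.card V ≤ ∑ x, f x :=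
  calc 4 * Fintype.card V = ∑ _v : V, 4 := by simp [mul_comm]
    _ ≤ ∑ v, ∑ i, f (.inr (v, i)) := Finset.sum_le_sum fun v _ => four_le_sum_path hf v
    _ = ∑ p : V × Fin 5, f (.inr p) := (Fintype.sum_prod_type fun p => f (.inr p)).symm
    _ ≤ ∑ x, f x := by
      rw [Fintype.sum_sum_type]
      exact Nat.le_add_left _ _

def centerRDF : V ⊕ V × Fin 5 → ℕ :=
  Sum.elim 0 fun p => ![1, 0, 2, 0, 1] p.2

theorem isRDF_centerRDF : IsRDF (hatGraph G) centerRDF := by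
  refine ⟨?_, ?_⟩
  · rintro (v | ⟨v, i⟩)
    · simp [centerRDF]
    · fin_cases i <;> simp [centerRDF]
  · rintro (v | ⟨v, i⟩) h0
    · exact ⟨.inr (v, 2), adj_inl_inr.mpr ⟨rfl, rfl⟩, rfl⟩
    · refine ⟨.inr (v, 2), adj_inr_inr.mpr ⟨rfl, pathGraph_adj.mpr ?_⟩, rfl⟩
      fin_cases i <;> simp_all [centerRDF]

theorem sum_centerRDF [Fintype V] : ∑ x : V ⊕ V × Fin 5, centerRDF x = 4 * Fintype.card V := by
  simp [centerRDF, Fintype.sum_sum_type, Fintype.sum_prod_type, Fin.sum_univ_five, mul_comm]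

end hatGraph

theorem stmt16_general {V : Type*} [Fintype V] (G : SimpleGraph V) :
    romanDom (hatGraph G) = 4 * Fintype.card V := by
  apply le_antisymm
  · calc romanDom (hatGraph G) ≤ ∑ x, hatGraph.centerRDF x :=
          romanDom_le hatGraph.isRDF_centerRDF
      _ = 4 * Fintype.card V := hatGraph.sum_centerRDF
  · exact le_romanDom fun _ => hatGraph.four_mul_card_le_sum

/-- For a graph `G` of order `n ≥ 2`, `γ_R(Ĝ) = 4n`. -/
theorem stmt16 {V : Type*} [Fintype V] (G : SimpleGraph V)
    (hn : 2 ≤ Fintype.card V) :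
    romanDom (hatGraph G) = 4 * Fintype.card V :=
  stmt16_general G
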